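/- Let H, W, b be positive natural numbers with W ≥ 2b+1, and let k : {-b,...,b} × {-b,...,b} → ℝ. Define M ∈ ℝ^{HW × HW} entrywise by: M_{r,c} = k_{p,q} if there exist 1 ≤ u ≤ H, 1 ≤ v ≤ W, and −b ≤ p,q ≤ b with 1 ≤ u+p ≤ H, 1 ≤ v+q ≤ W such that r = (u-1)W + v and c = (u+p-1)W + (v+q); and M_{r,c} = 0 otherwise. Then M is well defined (the quadruple (u,v,p,q) realizing a given pair (r,c) is unique), and for every X ∈ ℝ^{H×W}, (M · vec(X))_{(u-1)W+v} = Σ_{p=-b}^{b} Σ_{q=-b}^{b} k_{p,q} X_{u+p,v+q}, where out-of-range entries of X are treated as 0. -/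
import Mathlib


open Finset Matrix

/-- Row-major flattening of an `H × W` image (given as a zero-padded function on `ℤ × ℤ`,
with 1-based spatial indices): the 0-based flat index `i` corresponds to the 1-based
spatial position `(i / W + 1, i % W + 1)`, i.e. `vec(X)_{(u-1)W + v} = X u v`. -/
def vecFlatten (H W : ℕ) (X : ℤ → ℤ → ℝ) (i : Fin (H * W)) : ℝ :=
  X (((i.val / W : ℕ) : ℤ) + 1) (((i.val % W : ℕ) : ℤ) + 1)

/-- The quadruple `(u, v, p, q)` realizes the (1-based) matrix position `(r, c)`:
`1 ≤ u ≤ H`, `1 ≤ v ≤ W`, `|p| ≤ b`, `|q| ≤ b`, `1 ≤ u+p ≤ H`, `1 ≤ v+q ≤ W`,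
`r = (u-1)W + v` and `c = (u+p-1)W + (v+q)`. -/
def Realizes (H W b : ℕ) (r c u v p q : ℤ) : Prop :=
  1 ≤ u ∧ u ≤ (H : ℤ) ∧ 1 ≤ v ∧ v ≤ (W : ℤ) ∧
  |p| ≤ (b : ℤ) ∧ |q| ≤ (b : ℤ) ∧
  1 ≤ u + p ∧ u + p ≤ (H : ℤ) ∧ 1 ≤ v + q ∧ v + q ≤ (W : ℤ) ∧
  r = (u - 1) * (W : ℤ) + v ∧ c = (u + p - 1) * (W : ℤ) + (v + q)

/-- Uniqueness of the decomposition `a*W + t` with `1 ≤ t ≤ W`. -/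
lemma decomp_unique (W : ℕ) (a a' t t' : ℤ) (ht : 1 ≤ t) (htW : t ≤ W)
    (ht' : 1 ≤ t') (ht'W : t' ≤ W) (h : a * W + t = a' * W + t') : a = a' ∧ t = t' := by
  have hWpos : (0:ℤ) < W := by linarith
  have key : (a - a') * (W:ℤ) = t' - t := by linear_combination h
  have ha : a = a' := by
    by_contra hne
    rcases lt_or_gt_of_ne hne with hlt | hgt
    · have h1 : a - a' ≤ -1 := by omega
      have h2 : (a - a') * (W:ℤ) ≤ (-1) * W := mul_le_mul_of_nonneg_right h1 hWpos.le
      nlinarith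
    · have h1 : 1 ≤ a - a' := by omega
      have h2 : 1 * (W:ℤ) ≤ (a - a') * W := mul_le_mul_of_nonneg_right h1 hWpos.le
      nlinarith
  refine ⟨ha, ?_⟩
  subst ha
  nlinarith [key]

/-- Decomposition of a flat index. -/
lemma flat_decomp (W : ℕ) (n : ℕ) :
    (n:ℤ) + 1 = (((n / W : ℕ) : ℤ) + 1 - 1) * W + (((n % W : ℕ) : ℤ) + 1) := by
  have h2 : ((W : ℤ) * ((n / W : ℕ) : ℤ) + ((n % W : ℕ) : ℤ)) = (n : ℤ) := by
    exact_mod_cast congrArg (Nat.cast : ℕ → ℤ) (Nat.div_add_mod n W)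
  linear_combination -h2

/-- A realizer of `(n+1, m+1)` is determined by `n` and `m`. -/
lemma realize_fix (H W b : ℕ) (hW : 0 < W) (n m : ℕ) (hn : n < H * W) (hm : m < H * W)
    (u v p q : ℤ) (h : Realizes H W b ((n:ℤ)+1) ((m:ℤ)+1) u v p q) :
    u = ((n / W : ℕ) : ℤ) + 1 ∧ v = ((n % W : ℕ) : ℤ) + 1 ∧
    u + p = ((m / W : ℕ) : ℤ) + 1 ∧ v + q = ((m % W : ℕ) : ℤ) + 1 := by
  obtain ⟨hu1, hu2, hv1, hv2, hp, hq, hup1, hup2, hvq1, hvq2, hr, hc⟩ := h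
  have hnmod : n % W < W := Nat.mod_lt _ hW
  have hmmod : m % W < W := Nat.mod_lt _ hW
  have e1 := decomp_unique W (u - 1) (((n / W : ℕ) : ℤ) + 1 - 1) v (((n % W : ℕ) : ℤ) + 1)
    hv1 hv2 (by omega) (by exact_mod_cast hnmod)
    (by rw [← hr]; exact flat_decomp W n)
  have e2 := decomp_unique W (u + p - 1) (((m / W : ℕ) : ℤ) + 1 - 1) (v + q)
    (((m % W : ℕ) : ℤ) + 1) hvq1 hvq2 (by omega) (by exact_mod_cast hmmod)
    (by rw [← hc]; exact flat_decomp W m)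
  exact ⟨by omega, e1.2, by omega, e2.2⟩

/-- the matrix `M` defined entrywise by `M_{r,c} = k_{p,q}` whenever some
quadruple `(u,v,p,q)` realizes `(r,c)`, and `M_{r,c} = 0` otherwise, is well defined
(the realizing quadruple is unique), and `M · vec(X)` computes the zero-padded
convolution of `X` with `k` at every position. -/
theorem banded_matrix_from_kernel_well_defined_and_convolves
    (H W b : ℕ) (hH : 0 < H) (hW : 0 < W) (hb : 0 < b) (hWb : 2 * b + 1 ≤ W)
    (k : ℤ → ℤ → ℝ)
    (M : Matrix (Fin (H * W)) (Fin (H * W)) ℝ)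
    (hMk : ∀ (r c : Fin (H * W)) (u v p q : ℤ),
        Realizes H W b ((r.val : ℤ) + 1) ((c.val : ℤ) + 1) u v p q → M r c = k p q)
    (hM0 : ∀ r c : Fin (H * W),
        (¬ ∃ u v p q : ℤ, Realizes H W b ((r.val : ℤ) + 1) ((c.val : ℤ) + 1) u v p q) →
        M r c = 0) :
    (∀ r c u v p q u' v' p' q' : ℤ,
        Realizes H W b r c u v p q → Realizes H W b r c u' v' p' q' →
        u = u' ∧ v = v' ∧ p = p' ∧ q = q') ∧
    (∀ X : ℤ → ℤ → ℝ,
        (∀ u v : ℤ, (u < 1 ∨ (H : ℤ) < u ∨ v < 1 ∨ (W : ℤ) < v) → X u v = 0) →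
        ∀ i : Fin (H * W),
          M.mulVec (vecFlatten H W X) i =
            ∑ p ∈ Finset.Icc (-(b : ℤ)) (b : ℤ), ∑ q ∈ Finset.Icc (-(b : ℤ)) (b : ℤ),
              k p q * X (((i.val / W : ℕ) : ℤ) + 1 + p) (((i.val % W : ℕ) : ℤ) + 1 + q)) := by
  classical
  have hHW : 0 < H * W := Nat.mul_pos hH hW
  constructor
  · -- uniqueness
    intro r c u v p q u' v' p' q' h1 h2
    obtain ⟨hu1, hu2, hv1, hv2, hp, hq, hup1, hup2, hvq1, hvq2, hr, hc⟩ := h1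
    obtain ⟨hu1', hu2', hv1', hv2', hp', hq', hup1', hup2', hvq1', hvq2', hr', hc'⟩ := h2
    have e1 := decomp_unique W (u - 1) (u' - 1) v v' hv1 hv2 hv1' hv2'
      (by rw [← hr, ← hr'])
    have e2 := decomp_unique W (u + p - 1) (u' + p' - 1) (v + q) (v' + q')
      hvq1 hvq2 hvq1' hvq2' (by rw [← hc, ← hc'])
    omega
  · intro X hX i
    set u : ℤ := ((i.val / W : ℕ) : ℤ) + 1 with hu_def
    set v : ℤ := ((i.val % W : ℕ) : ℤ) + 1 with hv_def
    have hi_lt : i.val < H * W := i.isLt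
    have hu1 : 1 ≤ u := by
      have := Int.natCast_nonneg (i.val / W)
      omega
    have hu2 : u ≤ (H : ℤ) := by
      have h0 : i.val < W * H := hi_lt.trans_le (Nat.mul_comm H W).le
      have h1 : i.val / W < H := Nat.div_lt_of_lt_mul h0
      have h2 : ((i.val / W : ℕ) : ℤ) < (H : ℤ) := by exact_mod_cast h1
      omega
    have hv1 : 1 ≤ v := by
      have := Int.natCast_nonneg (i.val % W)
      omega
    have hv2 : v ≤ (W : ℤ) := by
      have h1 : i.val % W < W := Nat.mod_lt _ hW
      have h2 : ((i.val % W : ℕ) : ℤ) < (W : ℤ) := by exact_mod_cast h1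
      omega
    have hidec : (i.val : ℤ) + 1 = (u - 1) * W + v := flat_decomp W i.val
    set T : Finset (ℤ × ℤ) :=
      (Finset.Icc (-(b:ℤ)) (b:ℤ) ×ˢ Finset.Icc (-(b:ℤ)) (b:ℤ)).filter
        (fun pq => 1 ≤ u + pq.1 ∧ u + pq.1 ≤ (H:ℤ) ∧ 1 ≤ v + pq.2 ∧ v + pq.2 ≤ (W:ℤ))
      with hT_def
    set S : Finset (Fin (H * W)) :=
      Finset.univ.filter
        (fun j => ∃ u' v' p' q' : ℤ,
          Realizes H W b ((i.val : ℤ) + 1) ((j.val : ℤ) + 1) u' v' p' q') with hS_def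
    have rhs_eq :
        (∑ p ∈ Finset.Icc (-(b:ℤ)) (b:ℤ), ∑ q ∈ Finset.Icc (-(b:ℤ)) (b:ℤ),
          k p q * X (u + p) (v + q))
        = ∑ pq ∈ T, k pq.1 pq.2 * X (u + pq.1) (v + pq.2) := by
      rw [← Finset.sum_product', hT_def]
      refine (Finset.sum_filter_of_ne ?_).symm
      intro pq _ hne
      by_contra hcon
      refine hne ?_
      have hz : X (u + pq.1) (v + pq.2) = 0 := by
        apply hX
        by_contra hall
        push_neg at hall
        obtain ⟨a1, a2, a3, a4⟩ := hall
        exact hcon ⟨a1, a2, a3, a4⟩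
      rw [hz, mul_zero]
    have lhs_eq : M.mulVec (vecFlatten H W X) i
        = ∑ j ∈ S, M i j * vecFlatten H W X j := by
      rw [Matrix.mulVec, dotProduct, hS_def]
      refine (Finset.sum_filter_of_ne ?_).symm
      intro j _ hne
      by_contra hcon
      exact hne (by rw [hM0 i j hcon, zero_mul])
    rw [lhs_eq, rhs_eq]
    refine Finset.sum_nbij'
      (fun j : Fin (H * W) =>
        ((((j.val / W : ℕ) : ℤ) + 1 - u, ((j.val % W : ℕ) : ℤ) + 1 - v) : ℤ × ℤ))
      (fun pq : ℤ × ℤ =>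
        (⟨((u + pq.1 - 1) * W + (v + pq.2) - 1).toNat % (H * W),
          Nat.mod_lt _ hHW⟩ : Fin (H * W)))
      ?_ ?_ ?_ ?_ ?_
    · -- maps S into T
      intro j hj
      rw [hS_def, Finset.mem_filter] at hj
      obtain ⟨-, u', v', p', q', hreal⟩ := hj
      obtain ⟨e1, e2, e3, e4⟩ := realize_fix H W b hW i.val j.val hi_lt j.isLt u' v' p' q' hreal
      obtain ⟨_, _, _, _, hp', hq', hup1', hup2', hvq1', hvq2', _, _⟩ := hreal
      rw [abs_le] at hp' hq'
      rw [hT_def, Finset.mem_filter, Finset.mem_product, Finset.mem_Icc, Finset.mem_Icc]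
      refine ⟨⟨⟨?_, ?_⟩, ?_, ?_⟩, ?_, ?_, ?_, ?_⟩ <;> simp only [] <;> omega
    · -- maps T into S
      intro pq hpq
      rw [hT_def, Finset.mem_filter, Finset.mem_product, Finset.mem_Icc, Finset.mem_Icc] at hpq
      obtain ⟨⟨hp, hq⟩, h1, h2, h3, h4⟩ := hpq
      set x : ℤ := (u + pq.1 - 1) * W + (v + pq.2) - 1 with hx_def
      have hW0 : (0:ℤ) ≤ W := by positivity
      have hb1 : (0:ℤ) ≤ (u + pq.1 - 1) * W := mul_nonneg (by omega) hW0
      have hb2 : (u + pq.1 - 1) * (W:ℤ) ≤ ((H:ℤ) - 1) * W :=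
        mul_le_mul_of_nonneg_right (by omega) hW0
      have hx0 : 0 ≤ x := by rw [hx_def]; linarith
      have hxlt : x < ((H * W : ℕ) : ℤ) := by push_cast; nlinarith
      have hmod : x.toNat % (H * W) = x.toNat := Nat.mod_eq_of_lt (by omega)
      have hcast : ((x.toNat % (H * W) : ℕ) : ℤ) = x := by rw [hmod]; omega
      rw [hS_def, Finset.mem_filter]
      refine ⟨Finset.mem_univ _, u, v, pq.1, pq.2, ?_⟩
      refine ⟨hu1, hu2, hv1, hv2, abs_le.2 ⟨hp.1, hp.2⟩, abs_le.2 ⟨hq.1, hq.2⟩,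
        h1, h2, h3, h4, hidec, ?_⟩
      show ((((u + pq.1 - 1) * W + (v + pq.2) - 1).toNat % (H * W) : ℕ) : ℤ) + 1
        = (u + pq.1 - 1) * W + (v + pq.2)
      rw [← hx_def] at *
      rw [hcast]
      rw [hx_def]
      ring
    · -- toJ (fromPQ j) = j  on S
      intro j hj
      rw [hS_def, Finset.mem_filter] at hj
      obtain ⟨-, u', v', p', q', hreal⟩ := hj
      obtain ⟨e1, e2, e3, e4⟩ := realize_fix H W b hW i.val j.val hi_lt j.isLt u' v' p' q' hreal
      have hxval : (u + (((j.val / W : ℕ) : ℤ) + 1 - u) - 1) * W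
          + (v + (((j.val % W : ℕ) : ℤ) + 1 - v)) - 1 = ((j.val : ℕ) : ℤ) := by
        have hd := flat_decomp W j.val
        linear_combination -hd
      apply Fin.ext
      simp only [hxval, Int.toNat_natCast]
      exact Nat.mod_eq_of_lt j.isLt
    · -- fromPQ (toJ pq) = pq  on T
      intro pq hpq
      rw [hT_def, Finset.mem_filter, Finset.mem_product, Finset.mem_Icc, Finset.mem_Icc] at hpq
      obtain ⟨⟨hp, hq⟩, h1, h2, h3, h4⟩ := hpq
      set x : ℤ := (u + pq.1 - 1) * W + (v + pq.2) - 1 with hx_def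
      have hW0 : (0:ℤ) ≤ W := by positivity
      have hb1 : (0:ℤ) ≤ (u + pq.1 - 1) * W := mul_nonneg (by omega) hW0
      have hb2 : (u + pq.1 - 1) * (W:ℤ) ≤ ((H:ℤ) - 1) * W :=
        mul_le_mul_of_nonneg_right (by omega) hW0
      have hx0 : 0 ≤ x := by rw [hx_def]; linarith
      have hxlt : x < ((H * W : ℕ) : ℤ) := by push_cast; nlinarith
      have hmod : x.toNat % (H * W) = x.toNat := Nat.mod_eq_of_lt (by omega)
      have hx1 : ((x.toNat : ℕ) : ℤ) = x := by omega
      have hdecx : (x.toNat : ℤ) + 1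
          = (((x.toNat / W : ℕ) : ℤ) + 1 - 1) * W + (((x.toNat % W : ℕ) : ℤ) + 1) :=
        flat_decomp W x.toNat
      have e := decomp_unique W (u + pq.1 - 1) (((x.toNat / W : ℕ) : ℤ) + 1 - 1)
        (v + pq.2) (((x.toNat % W : ℕ) : ℤ) + 1) h3 h4 (by omega)
        (by exact_mod_cast Nat.mod_lt x.toNat hW)
        (by rw [← hdecx]; rw [hx1, hx_def]; ring)
      have ediv : ((x.toNat / W : ℕ) : ℤ) + 1 = u + pq.1 := by omega
      have emod : ((x.toNat % W : ℕ) : ℤ) + 1 = v + pq.2 := by omega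
      rw [Prod.ext_iff]
      refine ⟨?_, ?_⟩
      · show (((((u + pq.1 - 1) * W + (v + pq.2) - 1).toNat % (H * W)) / W : ℕ) : ℤ)
            + 1 - u = pq.1
        rw [← hx_def, hmod]
        omega
      · show (((((u + pq.1 - 1) * W + (v + pq.2) - 1).toNat % (H * W)) % W : ℕ) : ℤ)
            + 1 - v = pq.2
        rw [← hx_def, hmod]
        omega
    · -- summand equality
      intro j hj
      rw [hS_def, Finset.mem_filter] at hj
      obtain ⟨-, u', v', p', q', hreal⟩ := hj
      obtain ⟨e1, e2, e3, e4⟩ := realize_fix H W b hW i.val j.val hi_lt j.isLt u' v' p' q' hreal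
      have hM : M i j = k p' q' := hMk i j u' v' p' q' hreal
      have hp'eq : ((j.val / W : ℕ) : ℤ) + 1 - u = p' := by omega
      have hq'eq : ((j.val % W : ℕ) : ℤ) + 1 - v = q' := by omega
      simp only [hM, hp'eq, hq'eq]
      unfold vecFlatten
      congr 2 <;> omega
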